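/- arXiv:1507.01329 — 2 statements merged into one kernel-verified Lean document; each statement's English description precedes it below -/
import Mathlib

section
/- With ν = 2∑_{j=1}^n θ^{2j-1}θ^{2j} in the exterior algebra on θ^1,…,θ^{2n} over ℂ, and t an invertible even variable, consider the element (t^2 + ν)^{1/2+k} := t^{2k+1}(1 + ν/t^2)^{1/2+k} ∈ ℂ[t, t^{-1}] ⊗ Λ, expanded by the (finite, by nilpotency of ν) binomial series. If k < n, then the coefficient of t^{2(k-n)+1} in this expansion equals (1/n!)·∏_{j=0}^{n-1}(1/2 + k - j)·ν^n, which is nonzero; hence (t^2+ν)^{1/2+k} does not lie in ℂ[t] ⊗ Λ. -/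
/-!
The summands `e_j = θ^{2j-1} θ^{2j}` of `ν / 2` commute and square to zero, so expanding
`(∑ e_j)^n` leaves only `n! · e_1 ⋯ e_n = n! · θ^1 ⋯ θ^{2n}`, which is nonzero because the top
exterior power of the standard basis pairs to `1` with the determinant. In the series only the
`ℓ = n` term reaches `t^{2(k-n)+1}`, and its coefficient is a product of half-integers, hence
nonzero; since `2(k-n)+1 < 0`, the series is not a polynomial in `t`.
-/

open ExteriorAlgebra LaurentPolynomial

theorem Commute.add_pow_succ_of_mul_self_eq_zero {R : Type*} [Semiring R] {x y : R}
    (h : Commute x y) (hy : y * y = 0) (m : ℕ) :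
    (x + y) ^ (m + 1) = x ^ (m + 1) + (m + 1) • (x ^ m * y) := by
  induction m with
  | zero => simp
  | succ m ih =>
    have hyx : x ^ m * y * x = x ^ (m + 1) * y := by rw [mul_assoc, ← h.eq, ← mul_assoc, pow_succ]
    have hyy : x ^ m * y * y = 0 := by rw [mul_assoc, hy, mul_zero]
    rw [pow_succ, ih, add_mul, mul_add, mul_add, smul_mul_assoc, smul_mul_assoc, hyx, hyy,
      smul_zero, add_zero, ← pow_succ, add_assoc, ← succ_nsmul']

open Nat in
theorem sum_pow_eq_factorial_smul_prod_and_sum_pow_succ_eq_zero {R : Type*} [Semiring R] {m : ℕ}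
    (e : Fin m → R) (hcomm : ∀ i j, Commute (e i) (e j)) (hsq : ∀ i, e i * e i = 0) :
    (∑ i, e i) ^ m = m ! • (List.ofFn e).prod ∧ (∑ i, e i) ^ (m + 1) = 0 := by
  induction m with
  | zero => simp
  | succ m ih =>
    obtain ⟨hpow, hvanish⟩ := ih (fun i => e i.castSucc) (fun i j => hcomm _ _) (fun i => hsq _)
    have hc : Commute (∑ i : Fin m, e i.castSucc) (e (Fin.last m)) :=
      Commute.sum_left _ _ _ fun i _ => hcomm _ _
    rw [Fin.sum_univ_castSucc, hc.add_pow_succ_of_mul_self_eq_zero (hsq _),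
      hc.add_pow_succ_of_mul_self_eq_zero (hsq _), hvanish, pow_succ, hvanish, zero_mul,
      zero_mul, smul_zero, add_zero, zero_add, hpow, List.ofFn_succ', List.prod_concat,
      smul_mul_assoc, smul_smul, factorial_succ]
    exact ⟨rfl, rfl⟩

theorem List.prod_ofFn_two_mul {M : Type*} [Monoid M] {n : ℕ} (f : Fin (2 * n) → M) :
    (List.ofFn f).prod =
      (List.ofFn fun j : Fin n => f ⟨2 * j, by omega⟩ * f ⟨2 * j + 1, by omega⟩).prod := by
  rw [List.ofFn_mul', List.prod_flatten, List.map_ofFn]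
  simp [Function.comp_def]

namespace ExteriorAlgebra

variable {R M : Type*} [CommRing R] [AddCommGroup M] [Module R M]

theorem ι_mul_ι_eq_neg (x y : M) : ι R x * ι R y = -(ι R y * ι R x) :=
  eq_neg_of_add_eq_zero_left (ι_add_mul_swap x y)

theorem commute_ι_ι_mul_ι (x y z : M) : Commute (ι R x) (ι R y * ι R z) := by
  rw [Commute, SemiconjBy, ← mul_assoc, ι_mul_ι_eq_neg x y, neg_mul, mul_assoc,
    ι_mul_ι_eq_neg x z, mul_neg, neg_neg, mul_assoc]

theorem commute_ι_mul_ι (w x y z : M) : Commute (ι R w * ι R x) (ι R y * ι R z) :=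
  (commute_ι_ι_mul_ι w y z).mul_left (commute_ι_ι_mul_ι x y z)

theorem ι_mul_ι_mul_self (x y : M) : ι R x * ι R y * (ι R x * ι R y) = 0 := by
  rw [mul_assoc, (commute_ι_ι_mul_ι y x y).eq, ← mul_assoc, ← mul_assoc, ι_sq_zero, zero_mul,
    zero_mul]

theorem ιMulti_basis_ne_zero [Nontrivial R] {m : ℕ} (b : Module.Basis (Fin m) R M) :
    ιMulti R m b ≠ 0 := by
  classical
  intro h
  have := congrArg (liftAlternating (Function.update 0 m b.det)) h
  rw [liftAlternating_apply_ιMulti, map_zero, Function.update_self, Module.Basis.det_self] at this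
  exact one_ne_zero this

open Nat in
theorem sum_ι_mul_ι_pow {n : ℕ} (v : Fin (2 * n) → M) :
    (∑ j : Fin n, ι R (v ⟨2 * j, by omega⟩) * ι R (v ⟨2 * j + 1, by omega⟩)) ^ n =
      n ! • ιMulti R (2 * n) v := by
  rw [(sum_pow_eq_factorial_smul_prod_and_sum_pow_succ_eq_zero _
    (fun _ _ => commute_ι_mul_ι _ _ _ _) fun _ => ι_mul_ι_mul_self _ _).1, ιMulti_apply,
    List.prod_ofFn_two_mul]

end ExteriorAlgebra

namespace LaurentPolynomial

variable {R : Type*} [Semiring R]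

theorem coeff_C_mul_T (a : R) (n m : ℤ) : (C a * T n).coeff m = if n = m then a else 0 := by
  rw [← single_eq_C_mul_T, AddMonoidAlgebra.coeff_single, Finsupp.single_apply]

theorem coeff_sum_C_mul_T_of_injOn {ι : Type*} {s : Finset ι} (a : ι → R) {e : ι → ℤ}
    (he : Set.InjOn e s) {i : ι} (hi : i ∈ s) :
    (∑ j ∈ s, C (a j) * T (e j)).coeff (e i) = a i := by
  rw [AddMonoidAlgebra.coeff_sum, Finset.sum_apply', Finset.sum_eq_single_of_mem i hi]
  · rw [coeff_C_mul_T, if_pos rfl]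
  · intro j hj hji
    rw [coeff_C_mul_T, if_neg fun h => hji (he hj hi h)]

theorem coeff_toLaurent_of_neg (f : Polynomial R) {m : ℤ} (hm : m < 0) :
    f.toLaurent.coeff m = 0 := by
  rw [← Finsupp.notMem_support_iff, support_coeff_toLaurent]
  simp only [Finset.mem_map, Nat.castEmbedding_apply, not_exists, not_and]
  omega

end LaurentPolynomial

theorem half_add_natCast_sub_natCast_ne_zero {K : Type*} [Field K] [CharZero K] (k j : ℕ) :
    (1 : K) / 2 + k - j ≠ 0 := by
  intro h
  have : ((2 * k + 1 : ℕ) : K) = ((2 * j : ℕ) : K) := by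
    push_cast
    linear_combination 2 * h
  have := Nat.cast_injective this
  omega

/-- In `ℂ[t,t⁻¹] ⊗ Λ` (modelled as Laurent polynomials over the exterior algebra
`Λ` on `θ^1,…,θ^{2n}`), the element `(t²+ν)^{1/2+k} = t^{2k+1}(1+ν/t²)^{1/2+k}` expanded by the
finite binomial series has, for `k < n`, coefficient `(1/n!)∏_{j=0}^{n-1}(1/2+k-j)·ν^n ≠ 0` at
`t^{2(k-n)+1}`; hence it does not lie in `ℂ[t] ⊗ Λ`. -/
theorem super_pfaffian_singular (n k : ℕ) (hk : k < n)
    (θ : Fin (2 * n) → ExteriorAlgebra ℂ (Fin (2 * n) → ℂ))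
    (hθ : ∀ i, θ i = ExteriorAlgebra.ι ℂ (Pi.single i (1 : ℂ)))
    (ν : ExteriorAlgebra ℂ (Fin (2 * n) → ℂ))
    (hν : ν = ∑ j : Fin n, (2 : ℂ) •
      (θ ⟨2 * (j : ℕ), by omega⟩ * θ ⟨2 * (j : ℕ) + 1, by omega⟩))
    (S : LaurentPolynomial (ExteriorAlgebra ℂ (Fin (2 * n) → ℂ)))
    (hS : S = ∑ ℓ ∈ Finset.range (n + 1),
      C (((1 / (Nat.factorial ℓ : ℂ)) *
          ∏ j ∈ Finset.range ℓ, ((1 : ℂ) / 2 + k - j)) • ν ^ ℓ) *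
        T (2 * (k : ℤ) + 1 - 2 * (ℓ : ℤ))) :
    S.coeff (2 * ((k : ℤ) - (n : ℤ)) + 1) =
        ((1 / (Nat.factorial n : ℂ)) * ∏ j ∈ Finset.range n, ((1 : ℂ) / 2 + k - j)) • ν ^ n ∧
      S.coeff (2 * ((k : ℤ) - (n : ℤ)) + 1) ≠ 0 ∧
      S ∉ Set.range (Polynomial.toLaurent (R := ExteriorAlgebra ℂ (Fin (2 * n) → ℂ))) := by
  have hcoeff : S.coeff (2 * ((k : ℤ) - (n : ℤ)) + 1) =
      ((1 / (Nat.factorial n : ℂ)) * ∏ j ∈ Finset.range n, ((1 : ℂ) / 2 + k - j)) • ν ^ n := by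
    rw [hS, show 2 * ((k : ℤ) - n) + 1 = 2 * k + 1 - 2 * (n : ℕ) by ring]
    exact coeff_sum_C_mul_T_of_injOn _ (fun a _ b _ h => by simpa using h)
      (Finset.self_mem_range_succ n)
  have hν_basis : ν = (2 : ℂ) • ∑ j : Fin n,
      ι ℂ (Pi.basisFun ℂ (Fin (2 * n)) ⟨2 * j, by omega⟩) *
        ι ℂ (Pi.basisFun ℂ (Fin (2 * n)) ⟨2 * j + 1, by omega⟩) := by
    simp only [hν, hθ, Pi.basisFun_apply, Finset.smul_sum]
  have hνn : ν ^ n ≠ 0 := by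
    rw [hν_basis, smul_pow, sum_ι_mul_ι_pow, ← Nat.cast_smul_eq_nsmul ℂ, smul_smul]
    exact smul_ne_zero (by simp [Nat.factorial_ne_zero]) (ιMulti_basis_ne_zero _)
  have hne := hcoeff ▸ smul_ne_zero (mul_ne_zero (by simp [Nat.factorial_ne_zero])
    (Finset.prod_ne_zero_iff.mpr fun j _ => half_add_natCast_sub_natCast_ne_zero k j)) hνn
  refine ⟨hcoeff, hne, ?_⟩
  rintro ⟨f, rfl⟩
  exact hne (coeff_toLaurent_of_neg f (by omega))
end

section
/- Let Q̃(k) denote the adjugate of the k×k matrix Q(k) = (q_{ij}) with q_{ij} = ∑_a x^a_i x^a_j in the polynomial ring, and E_{rj} the polarization operators. Then E_{jj}(Q̃(k)_{jj}) = 0 and E_{rj}(Q̃(k)_{rj}) = -Q̃(k)_{jj} for all r ≠ j, r ≤ k. -/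
/-!
The polarization operator `E_{rj}` is a derivation, and on the Gram matrix it acts only on
column `j` away from row `j`, sending `q_{tj}` to `q_{tr}`. Write `Q̃_{rj} = det B`, where `B` is
`Q` with row `j` replaced by `e_r`. Differentiating `det B` column by column replaces column `j`
of `B` by (column `r` of `B`) `- e_j`. The first determinant is `det B = Q̃_{jj}` when `r = j`
and vanishes (two equal columns) when `r ≠ j`; the second is the `(j, j)` cofactor `Q̃_{jj}`.
-/

open MvPolynomial

theorem Matrix.det_updateCol_single_self {A : Type*} [CommRing A] {n : Type*} [Fintype n]
    [DecidableEq n] (M : Matrix n n A) (j : n) :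
    (M.updateCol j (Pi.single j 1)).det = M.adjugate j j := by
  rw [← Matrix.det_transpose, ← Matrix.updateRow_transpose, ← Matrix.adjugate_apply,
    ← Matrix.adjugate_transpose, Matrix.transpose_apply]

namespace Derivation

section

variable {R A : Type*} [CommSemiring R] [CommSemiring A] [Algebra R A] (D : Derivation R A A)

theorem leibniz_prod {ι : Type*} [DecidableEq ι] (s : Finset ι) (f : ι → A) :
    D (∏ i ∈ s, f i) = ∑ i ∈ s, D (f i) * ∏ l ∈ s.erase i, f l := by
  induction s using Finset.induction with
  | empty => simp
  | insert a s ha ih =>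
    rw [Finset.prod_insert ha, leibniz, ih, Finset.sum_insert ha, Finset.erase_insert ha,
      smul_eq_mul, smul_eq_mul, Finset.mul_sum, add_comm]
    congr 1
    · ring
    refine Finset.sum_congr rfl fun i hi => ?_
    rw [Finset.erase_insert_of_ne (ne_of_mem_of_not_mem hi ha).symm,
      Finset.prod_insert (fun h => ha (Finset.mem_of_mem_erase h))]
    ring

end

variable {R A : Type*} [CommSemiring R] [CommRing A] [Algebra R A] (D : Derivation R A A)
  {n : Type*} [Fintype n] [DecidableEq n]

theorem map_det (M : Matrix n n A) :
    D M.det = ∑ j, (M.updateCol j fun i => D (M i j)).det := by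
  have det_updateCol_eq (v : n → A) (j : n) : (M.updateCol j v).det =
      ∑ σ : Equiv.Perm n, σ.sign • (v (σ j) * ∏ i ∈ Finset.univ.erase j, M (σ i) i) := by
    rw [Matrix.det_apply]
    refine Finset.sum_congr rfl fun σ _ => ?_
    rw [← Finset.mul_prod_erase _ _ (Finset.mem_univ j)]
    congr 2
    · simp
    · exact Finset.prod_congr rfl fun i hi => by simp [(Finset.mem_erase.mp hi).1]
  simp_rw [det_updateCol_eq]
  rw [Finset.sum_comm, Matrix.det_apply M, map_sum]
  simp_rw [Units.smul_def, map_zsmul, leibniz_prod, Finset.smul_sum]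

theorem map_adjugate_apply (M : Matrix n n A) (r j : n)
    (hM : ∀ t, t ≠ j → ∀ s, D (M t s) = (Pi.single j (M t r) : n → A) s) :
    D (M.adjugate r j) = if r = j then 0 else -M.adjugate j j := by
  set B := M.updateRow j (Pi.single r 1)
  set w : n → A := (fun t => B t r) - Pi.single j 1
  have hDB (t s : n) : D (B t s) = (Pi.single j (w t) : n → A) s := by
    by_cases ht : t = j
    · subst ht
      by_cases hs : s = r <;> simp [B, w, Pi.single_apply, hs]
    · simp [B, w, ht, hM t ht s]
  have hdet : D B.det = (B.updateCol j w).det := by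
    rw [map_det, Finset.sum_eq_single j]
    · simp [hDB]
    · intro s _ hs
      exact Matrix.det_eq_zero_of_column_eq_zero s fun t => by simp [hDB, hs]
    · simp
  have hcorner : (B.updateCol j (Pi.single j 1)).det = M.adjugate j j := by
    rw [Matrix.det_updateCol_single_self, Matrix.adjugate_apply, Matrix.adjugate_apply,
      Matrix.updateRow_idem]
  have hcol : (B.updateCol j fun t => B t r).det = (B.updateCol j w).det + M.adjugate j j := by
    rw [← hcorner, ← Matrix.det_updateCol_add, sub_add_cancel]
  rw [Matrix.adjugate_apply, hdet, eq_sub_of_add_eq hcol.symm]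
  split_ifs with hrj
  · subst hrj
    rw [Matrix.updateCol_eq_self, Matrix.adjugate_apply, sub_self]
  · rw [Matrix.det_updateCol_eq_zero hrj, zero_sub]

end Derivation

namespace MvPolynomial

variable {R : Type*} [CommSemiring R] {ι σ : Type*} [Fintype ι]

noncomputable def polarization (s t : σ) :
    Derivation R (MvPolynomial (ι × σ) R) (MvPolynomial (ι × σ) R) :=
  ∑ a : ι, (X (a, s) : MvPolynomial (ι × σ) R) • pderiv (a, t)

theorem polarization_apply (s t : σ) (f : MvPolynomial (ι × σ) R) :
    polarization s t f = ∑ a, X (a, s) * pderiv (a, t) f := by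
  rw [polarization, ← Derivation.coeFnAddMonoidHom_apply, map_sum, Finset.sum_apply]
  rfl

theorem polarization_X [DecidableEq σ] (s t : σ) (b : ι) (u : σ) :
    polarization s t (X (b, u) : MvPolynomial (ι × σ) R) = if u = t then X (b, s) else 0 := by
  classical
  by_cases h : u = t <;> simp [polarization_apply, pderiv_X, Pi.single_apply, Prod.ext_iff, h]

noncomputable def gram (u v : σ) : MvPolynomial (ι × σ) R :=
  ∑ a, X (a, u) * X (a, v)

theorem polarization_gram [DecidableEq σ] (s t u v : σ) :
    polarization s t (gram u v : MvPolynomial (ι × σ) R) =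
      (if u = t then gram s v else 0) + (if v = t then gram u s else 0) := by
  simp only [gram, map_sum, Derivation.leibniz, polarization_X, smul_eq_mul]
  split_ifs <;> simp [Finset.sum_add_distrib, mul_comm, add_comm]

end MvPolynomial

/-- With `Q(k)` the Gram matrix `q_{ij} = ∑_a x^a_i x^a_j`, `Q̃(k)` its adjugate
and `E_{rj} = ∑_a x^a_r ∂_{aj}` the polarization operators, one has
`E_{jj}(Q̃(k)_{jj}) = 0` and `E_{rj}(Q̃(k)_{rj}) = -Q̃(k)_{jj}` for `r ≠ j`. -/
theorem polarization_on_adjugate (m N k : ℕ) (hk : k ≤ N)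
    (q : Fin N → Fin N → MvPolynomial (Fin m × Fin N) ℂ)
    (hq : ∀ t s : Fin N, q t s = ∑ a : Fin m, X (a, t) * X (a, s))
    (Q : Matrix (Fin k) (Fin k) (MvPolynomial (Fin m × Fin N) ℂ))
    (hQ : Q = Matrix.of fun i j : Fin k => q (Fin.castLE hk i) (Fin.castLE hk j))
    (E : Fin N → Fin N → MvPolynomial (Fin m × Fin N) ℂ → MvPolynomial (Fin m × Fin N) ℂ)
    (hE : ∀ s t f, E s t f = ∑ a : Fin m, X (a, s) * pderiv (a, t) f) :
    (∀ j : Fin k, E (Fin.castLE hk j) (Fin.castLE hk j) (Q.adjugate j j) = 0) ∧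
    (∀ r j : Fin k, r ≠ j →
      E (Fin.castLE hk r) (Fin.castLE hk j) (Q.adjugate r j) = -Q.adjugate j j) := by
  have hE_eq (s t : Fin N) : E s t = polarization s t := by
    funext f
    rw [hE, polarization_apply]
  have hpolarization_Q (r j t : Fin k) (ht : t ≠ j) (s : Fin k) :
      polarization (Fin.castLE hk r) (Fin.castLE hk j) (Q t s) =
        (Pi.single j (Q t r) : Fin k → _) s := by
    have hq_gram : q = gram := funext₂ hq
    subst hQ hq_gram
    simp [polarization_gram, Pi.single_apply, Fin.castLE_inj, ht]
  refine ⟨fun j => ?_, fun r j hrj => ?_⟩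
  · rw [hE_eq, Derivation.map_adjugate_apply _ Q j j (hpolarization_Q j j), if_pos rfl]
  · rw [hE_eq, Derivation.map_adjugate_apply _ Q r j (hpolarization_Q r j), if_neg hrj]
end
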